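/- Let v : [0, θ₀] → ℝ be C² with (v(θ), v'(θ)) ≠ (0,0) for all θ, and write v(θ) = ρ(θ) cos ψ(θ), v'(θ) = ρ(θ) sin ψ(θ) with ρ > 0 and ψ continuous. Then v satisfies the ODE v'' = −v (8p v² + (6p−8)(v')²)/(4v² + (p−1)(v')²) on (0, θ₀) if and only if ρ and ψ satisfy ρ'/ρ = −cos ψ · sin ψ · F_p(ψ) and ψ' = −1 − cos²ψ · F_p(ψ) on (0, θ₀), where F_p(ψ) = ((8p−4) cos²ψ + (5p−7) sin²ψ)/(4 cos²ψ + (p−1) sin²ψ). -/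

import Mathlib

open Real

noncomputable def Fp (p ψ : ℝ) : ℝ :=
  ((8 * p - 4) * cos ψ ^ 2 + (5 * p - 7) * sin ψ ^ 2) /
    (4 * cos ψ ^ 2 + (p - 1) * sin ψ ^ 2)

/-!
Differentiating `v = ρ cos ψ` and `v' = ρ sin ψ` gives `v' = ρ' cos ψ - ρ ψ' sin ψ` and
`v'' = ρ' sin ψ + ρ ψ' cos ψ`. Since `ρ > 0`, the right-hand side of the ODE equals
`-v (1 + F_p(ψ))`, and rotating the pair of equations (v', v'') by the angle `-ψ` solves them
for `ρ'/ρ` and `ψ'`: pointwise, the ODE is then equivalent to the polar system.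
-/

open Filter Topology

lemma Fp_denom_pos {p : ℝ} (hp : 1 < p) (x : ℝ) : 0 < 4 * cos x ^ 2 + (p - 1) * sin x ^ 2 := by
  rcases le_or_gt p 5 with h | h <;>
    nlinarith [sin_sq_add_cos_sq x, sq_nonneg (cos x), sq_nonneg (sin x)]

lemma Fp_mul_denom {p : ℝ} (hp : 1 < p) (x : ℝ) :
    Fp p x * (4 * cos x ^ 2 + (p - 1) * sin x ^ 2) =
      (8 * p - 4) * cos x ^ 2 + (5 * p - 7) * sin x ^ 2 :=
  div_mul_cancel₀ _ (Fp_denom_pos hp x).ne'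

lemma ode_rhs_polar {p : ℝ} (hp : 1 < p) {R : ℝ} (hR : R ≠ 0) (x : ℝ) :
    -(R * cos x) * (8 * p * (R * cos x) ^ 2 + (6 * p - 8) * (R * sin x) ^ 2) /
        (4 * (R * cos x) ^ 2 + (p - 1) * (R * sin x) ^ 2) = -(R * cos x) * (Fp p x + 1) := by
  have hden : 4 * (R * cos x) ^ 2 + (p - 1) * (R * sin x) ^ 2 ≠ 0 := by
    rw [show 4 * (R * cos x) ^ 2 + (p - 1) * (R * sin x) ^ 2 =
      R ^ 2 * (4 * cos x ^ 2 + (p - 1) * sin x ^ 2) by ring]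
    exact mul_ne_zero (pow_ne_zero 2 hR) (Fp_denom_pos hp x).ne'
  rw [div_eq_iff hden]
  linear_combination R ^ 3 * cos x * Fp_mul_denom hp x

lemma deriv_mul_cos_comp {f ρ ψ : ℝ → ℝ} {θ : ℝ} (hf : f =ᶠ[𝓝 θ] fun t => ρ t * cos (ψ t))
    (hρ : DifferentiableAt ℝ ρ θ) (hψ : DifferentiableAt ℝ ψ θ) :
    deriv f θ = deriv ρ θ * cos (ψ θ) - ρ θ * sin (ψ θ) * deriv ψ θ := by
  have h : HasDerivAt (fun t => ρ t * cos (ψ t))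
      (deriv ρ θ * cos (ψ θ) + ρ θ * (-sin (ψ θ) * deriv ψ θ)) θ :=
    hρ.hasDerivAt.mul ((hasDerivAt_cos _).comp θ hψ.hasDerivAt)
  rw [hf.deriv_eq, h.deriv]
  ring

lemma deriv_mul_sin_comp {f ρ ψ : ℝ → ℝ} {θ : ℝ} (hf : f =ᶠ[𝓝 θ] fun t => ρ t * sin (ψ t))
    (hρ : DifferentiableAt ℝ ρ θ) (hψ : DifferentiableAt ℝ ψ θ) :
    deriv f θ = deriv ρ θ * sin (ψ θ) + ρ θ * cos (ψ θ) * deriv ψ θ := by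
  have h : HasDerivAt (fun t => ρ t * sin (ψ t))
      (deriv ρ θ * sin (ψ θ) + ρ θ * (cos (ψ θ) * deriv ψ θ)) θ :=
    hρ.hasDerivAt.mul ((hasDerivAt_sin _).comp θ hψ.hasDerivAt)
  rw [hf.deriv_eq, h.deriv]
  ring

/-- `R, x` are the polar coordinates of `(v, v')`, `A, B` the derivatives of `R, x`, `D` that of `v'`. -/
lemma polar_ode_iff {p R x A B D : ℝ} (hR : R ≠ 0)
    (hv' : R * sin x = A * cos x - R * sin x * B) (hv'' : D = A * sin x + R * cos x * B) :
    D = -(R * cos x) * (Fp p x + 1) ↔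
      A / R = -cos x * sin x * Fp p x ∧ B = -1 - cos x ^ 2 * Fp p x := by
  have pyth := sin_sq_add_cos_sq x
  rw [hv'', div_eq_iff hR]
  constructor
  · intro h
    refine ⟨by linear_combination sin x * h - cos x * hv' - A * pyth, mul_left_cancel₀ hR ?_⟩
    linear_combination cos x * h + sin x * hv' - R * (B + 1) * pyth
  · rintro ⟨hA, hB⟩
    linear_combination sin x * hA + R * cos x * hB - R * cos x * Fp p x * pyth

theorem stmt_18_general (p : ℝ) (hp : 1 < p) (θ₀ : ℝ)
    (v ρ ψ : ℝ → ℝ)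
    (hρ : Differentiable ℝ ρ) (hψ : Differentiable ℝ ψ)
    (hρpos : ∀ θ ∈ Set.Icc 0 θ₀, 0 < ρ θ)
    (hX : ∀ θ ∈ Set.Icc 0 θ₀, v θ = ρ θ * cos (ψ θ))
    (hY : ∀ θ ∈ Set.Icc 0 θ₀, deriv v θ = ρ θ * sin (ψ θ)) :
    (∀ θ ∈ Set.Ioo 0 θ₀,
        deriv (deriv v) θ =
          -v θ * (8 * p * v θ ^ 2 + (6 * p - 8) * deriv v θ ^ 2) /
            (4 * v θ ^ 2 + (p - 1) * deriv v θ ^ 2)) ↔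
    (∀ θ ∈ Set.Ioo 0 θ₀,
        deriv ρ θ / ρ θ = -cos (ψ θ) * sin (ψ θ) * Fp p (ψ θ) ∧
        deriv ψ θ = -1 - cos (ψ θ) ^ 2 * Fp p (ψ θ)) := by
  refine forall₂_congr fun θ hθ => ?_
  have hθ' : θ ∈ Set.Icc 0 θ₀ := Set.Ioo_subset_Icc_self hθ
  have hIcc : Set.Icc 0 θ₀ ∈ 𝓝 θ := Icc_mem_nhds hθ.1 hθ.2
  have hR := (hρpos θ hθ').ne'
  have hv' := deriv_mul_cos_comp (eventually_of_mem hIcc hX) (hρ θ) (hψ θ)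
  have hv'' := deriv_mul_sin_comp (eventually_of_mem hIcc hY) (hρ θ) (hψ θ)
  rw [hY θ hθ'] at hv'
  rw [hX θ hθ', hY θ hθ', ode_rhs_polar hp hR]
  exact polar_ode_iff hR hv' hv''

theorem stmt_18 (p : ℝ) (hp : 1 < p) (θ₀ : ℝ) (hθ₀ : 0 < θ₀)
    (v ρ ψ : ℝ → ℝ)
    (hv : ContDiff ℝ 2 v) (hρ : Differentiable ℝ ρ) (hψ : Differentiable ℝ ψ)
    (hρpos : ∀ θ ∈ Set.Icc 0 θ₀, 0 < ρ θ)
    (hnondeg : ∀ θ ∈ Set.Icc 0 θ₀, (v θ, deriv v θ) ≠ (0, 0))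
    (hX : ∀ θ ∈ Set.Icc 0 θ₀, v θ = ρ θ * cos (ψ θ))
    (hY : ∀ θ ∈ Set.Icc 0 θ₀, deriv v θ = ρ θ * sin (ψ θ)) :
    (∀ θ ∈ Set.Ioo 0 θ₀,
        deriv (deriv v) θ =
          -v θ * (8 * p * v θ ^ 2 + (6 * p - 8) * deriv v θ ^ 2) /
            (4 * v θ ^ 2 + (p - 1) * deriv v θ ^ 2)) ↔
    (∀ θ ∈ Set.Ioo 0 θ₀,
        deriv ρ θ / ρ θ = -cos (ψ θ) * sin (ψ θ) * Fp p (ψ θ) ∧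
        deriv ψ θ = -1 - cos (ψ θ) ^ 2 * Fp p (ψ θ)) :=
  stmt_18_general p hp θ₀ v ρ ψ hρ hψ hρpos hX hY
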